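/- If P and Q are finite posets on d elements having a common linear extension, then Ω(O_P, O_Q), Ω(O_P, C_Q), and Ω(C_P, C_Q) all have the same (d+1)-dimensional volume. -/

import Mathlib

def orderPolytope {d : ℕ} (r : Fin d → Fin d → Prop) : Set (Fin d → ℝ) :=
  {x | (∀ i, 0 ≤ x i ∧ x i ≤ 1) ∧ ∀ i j, r i j → x j ≤ x i}

def chainPolytope {d : ℕ} (r : Fin d → Fin d → Prop) : Set (Fin d → ℝ) :=
  {x | (∀ i, 0 ≤ x i) ∧
    ∀ c : Finset (Fin d), IsMaxChain r (c : Set (Fin d)) → ∑ i ∈ c, x i ≤ 1}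

def OmegaPoly {d : ℕ} (A B : Set (Fin d → ℝ)) : Set (Fin (d + 1) → ℝ) :=
  convexHull ℝ
    (((fun x => Fin.snoc x (1 : ℝ)) '' A) ∪ ((fun x => Fin.snoc (-x) (-1 : ℝ)) '' B))

open Function Finset MeasureTheory
open scoped Pointwise

/-!
For `c ≥ 0` let `ψ_P(c)_i` (`maxChainSum`) be the largest weight `∑_{j ∈ C} c_j` of a `P`-chain
`C` with least element `i`; it satisfies `ψ_P(c)_i = c_i + max(0, max_{j >_P i} ψ_P(c)_j)`, it is
`P`-antitone, and `c ∈ m • C_P` iff `c ≥ 0` and `ψ_P(c) ≤ m` (it inverts Stanley's transfer map).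
The slice of `Ω(A, B)` at height `t ∈ [-1, 1]` is `λ • A - μ • B` with `λ = (1 + t) / 2`,
`μ = (1 - t) / 2`. The piecewise linear map `G(x) = ψ_P(x⁺) - ψ_Q(x⁻)` (`transferMap`) satisfies
`x ∈ λ • C_P - μ • C_Q ↔ G(x) ∈ λ • O_P - μ • O_Q`; the direction `←` is an induction down a
common linear extension of `P` and `Q`, which bounds `ψ_P(x⁺) ≤ u` and `ψ_Q(x⁻) ≤ v` whenever
`G(x) = u - v` with `u`, `v` in the order polytopes. The same holds for `x ↦ ψ_P(x⁺) - x⁻` and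
`λ • O_P - μ • C_Q`. Finally `G(x)_i - x_i` depends only on the coordinates of `x` above `i` in
the linear extension, so `G` is a composition of shears and preserves Lebesgue measure.
-/

section Triangular

variable {ι : Type*} [Fintype ι] [DecidableEq ι]

/-- Fubini in the `a`-th coordinate, and translation invariance of Lebesgue measure on `ℝ`. -/
theorem measurePreserving_update_add (a : ι) {g : (ι → ℝ) → ℝ} (hg : Measurable g)
    (hga : ∀ x t, g (update x a t) = g x) :
    MeasurePreserving (fun x => update x a (x a + g x)) volume volume := by
  set T := fun x : ι → ℝ => update x a (x a + g x)
  have hT : Measurable T :=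
    measurable_update'.comp (measurable_id.prodMk ((measurable_pi_apply a).add hg))
  refine ⟨hT, Measure.ext fun S hS => ?_⟩
  rw [Measure.map_apply hT hS, ← lintegral_indicator_one (hT hS), ← lintegral_indicator_one hS,
    volume_pi, lintegral_eq_lmarginal_univ 0, lintegral_eq_lmarginal_univ 0,
    ← insert_erase (mem_univ a),
    lmarginal_insert' _ (measurable_one.indicator (hT hS)) (notMem_erase a _),
    lmarginal_insert' _ (measurable_one.indicator hS) (notMem_erase a _)]
  congr 2 with x
  have hfiber : ∀ t, T (update x a t) = update x a (t + g x) := fun t => by simp [T, hga]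
  have hind : ∀ y, (T ⁻¹' S).indicator (1 : (ι → ℝ) → ENNReal) y = S.indicator 1 (T y) :=
    fun y => rfl
  simp_rw [hind, hfiber]
  exact lintegral_add_right_eq_self (fun t => S.indicator 1 (update x a t)) (g x)

/-- Adding the corrections `f i` one coordinate at a time, in increasing order of `rk`, is a
sequence of shears, each reading only coordinates that are not modified afterwards. -/
theorem measurePreserving_add_of_triangular {κ : Type*} [LinearOrder κ] (rk : ι → κ)
    {f : ι → (ι → ℝ) → ℝ} (hf : ∀ i, Measurable (f i))
    (hdep : ∀ i x y, (∀ j, rk i < rk j → x j = y j) → f i x = f i y) :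
    MeasurePreserving (fun x i => x i + f i x) volume volume := by
  suffices key : ∀ s : Finset ι,
      MeasurePreserving (fun x i => x i + if i ∈ s then f i x else 0) volume volume by
    simpa using key univ
  intro s
  induction s using Finset.induction_on_min_value rk with
  | empty =>
    convert MeasurePreserving.id (volume : Measure (ι → ℝ)) using 1
    funext x i
    simp
  | insert a s ha hmin ih =>
    have hshear := measurePreserving_update_add a (hf a) fun x t =>
      hdep a _ _ fun j hj => update_of_ne (ne_of_apply_ne rk hj.ne') _ _
    convert ih.comp hshear using 1
    funext x i
    rcases eq_or_ne i a with rfl | hia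
    · simp [ha]
    by_cases his : i ∈ s
    · have hfi : f i (update x a (x a + f a x)) = f i x :=
        hdep i _ _ fun j hj => update_of_ne (by rintro rfl; exact (hmin i his).not_gt hj) _ _
      simp [hia, his, hfi]
    · simp [hia, his]

end Triangular

theorem MeasureTheory.MeasurePreserving.snoc_init {d : ℕ} {G : (Fin d → ℝ) → Fin d → ℝ}
    (hG : MeasurePreserving G volume volume) :
    MeasurePreserving
      (fun z : Fin (d + 1) → ℝ => (Fin.snoc (G (Fin.init z)) (z (Fin.last d)) : Fin (d + 1) → ℝ))
      volume volume := by
  set e := MeasurableEquiv.piFinSuccAbove (fun _ : Fin (d + 1) => ℝ) (Fin.last d)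
  have he : MeasurePreserving e volume volume :=
    volume_preserving_piFinSuccAbove (fun _ : Fin (d + 1) => ℝ) (Fin.last d)
  convert he.symm.comp (((MeasurePreserving.id volume).prod hG).comp he) using 1
  funext z
  simp [e, MeasurableEquiv.piFinSuccAbove_symm_apply]
  rfl

variable {α : Type*} [Fintype α]

section SupAbove

open scoped Classical in
noncomputable def supAbove (r : α → α → Prop) (f : α → ℝ) (i : α) : ℝ :=
  ({j | r i j} : Finset α).fold max 0 f

variable {r : α → α → Prop} {f g : α → ℝ} {i j : α} {b : ℝ}

lemma supAbove_nonneg : 0 ≤ supAbove r f i :=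
  (le_fold_max _).2 (Or.inl le_rfl)

lemma le_supAbove (h : r i j) : f j ≤ supAbove r f i :=
  (le_fold_max _).2 (Or.inr ⟨j, by simpa using h, le_rfl⟩)

lemma supAbove_le (hb : 0 ≤ b) (h : ∀ j, r i j → f j ≤ b) : supAbove r f i ≤ b :=
  (fold_max_le _).2 ⟨hb, fun j hj => h j (by simpa using hj)⟩

lemma supAbove_congr (h : ∀ j, r i j → f j = g j) : supAbove r f i = supAbove r g i :=
  fold_congr fun j hj => h j (by simpa using hj)

lemma supAbove_le_zero_or_exists : supAbove r f i ≤ 0 ∨ ∃ j, r i j ∧ supAbove r f i ≤ f j := by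
  by_contra! h
  exact lt_irrefl _ ((fold_max_lt _).2 ⟨h.1, fun j hj => h.2 j (by simpa using hj)⟩)

lemma supAbove_emptyRelation : supAbove emptyRelation f i = 0 :=
  le_antisymm (supAbove_le le_rfl fun _ h => h.elim) supAbove_nonneg

lemma continuous_supAbove {X : Type*} [TopologicalSpace X] {F : X → α → ℝ}
    (hF : ∀ j, r i j → Continuous fun x => F x j) : Continuous fun x => supAbove r (F x) i := by
  classical
  suffices key : ∀ s : Finset α, (∀ j ∈ s, Continuous fun x => F x j) →
      Continuous fun x => s.fold max 0 (F x) from key _ fun j hj => hF j (by simpa using hj)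
  intro s
  induction s using Finset.induction_on with
  | empty => simpa using continuous_const
  | insert j s hj ih =>
    intro hs
    simp only [fold_insert hj]
    exact (hs j (mem_insert_self j s)).max (ih fun k hk => hs k (mem_insert_of_mem hk))

end SupAbove

section MaxChainSum

instance : IsStrictOrder α emptyRelation where
  trans _ _ _ h := h.elim

variable (r : α → α → Prop) [IsStrictOrder α r]

open scoped Classical in
noncomputable def maxChainSum (c : α → ℝ) : α → ℝ :=
  (Finite.wellFounded_of_trans_of_irrefl (swap r)).fix fun i ψ =>
    c i + supAbove r (fun j => if h : r i j then ψ j h else 0) i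

variable {r} {c c' : α → ℝ} {i j : α}

lemma maxChainSum_eq (c : α → ℝ) (i : α) :
    maxChainSum r c i = c i + supAbove r (maxChainSum r c) i := by
  rw [maxChainSum, WellFounded.fix_eq]
  congr 1
  exact supAbove_congr fun j h => dif_pos h

lemma le_maxChainSum : c i ≤ maxChainSum r c i := by
  rw [maxChainSum_eq]; exact le_add_of_nonneg_right supAbove_nonneg

lemma maxChainSum_nonneg (hc : 0 ≤ c) : 0 ≤ maxChainSum r c i :=
  (hc i).trans le_maxChainSum

lemma maxChainSum_le_of_rel (hc : 0 ≤ c) (h : r i j) : maxChainSum r c j ≤ maxChainSum r c i := by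
  rw [maxChainSum_eq c i]
  exact (le_supAbove h).trans (le_add_of_nonneg_left (hc i))

lemma maxChainSum_mono (h : c ≤ c') : maxChainSum r c ≤ maxChainSum r c' := by
  intro i
  induction i using (Finite.wellFounded_of_trans_of_irrefl (swap r)).induction with
  | _ i ih =>
    rw [maxChainSum_eq, maxChainSum_eq c']
    exact add_le_add (h i) (supAbove_le supAbove_nonneg fun j hj =>
      (ih j hj).trans (le_supAbove hj))

lemma maxChainSum_congr (h : ∀ k, (k = i ∨ r i k) → c k = c' k) :
    maxChainSum r c i = maxChainSum r c' i := by
  induction i using (Finite.wellFounded_of_trans_of_irrefl (swap r)).induction with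
  | _ i ih =>
    rw [maxChainSum_eq, maxChainSum_eq c', h i (Or.inl rfl)]
    congr 1
    refine supAbove_congr fun j hj => ih j hj fun k hk => h k (Or.inr ?_)
    rcases hk with rfl | hk
    exacts [hj, _root_.trans hj hk]

lemma supAbove_maxChainSum_congr {κ : Type*} [LinearOrder κ] {rk : α → κ}
    (hr : ∀ i j, r i j → rk i < rk j) (h : ∀ j, rk i < rk j → c j = c' j) :
    supAbove r (maxChainSum r c) i = supAbove r (maxChainSum r c') i := by
  refine supAbove_congr fun j hij => maxChainSum_congr fun k hk => h k ?_
  rcases hk with rfl | hjk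
  exacts [hr _ _ hij, (hr _ _ hij).trans (hr _ _ hjk)]

lemma continuous_maxChainSum (i : α) : Continuous fun c : α → ℝ => maxChainSum r c i := by
  induction i using (Finite.wellFounded_of_trans_of_irrefl (swap r)).induction with
  | _ i ih =>
    simp_rw [maxChainSum_eq _ i]
    exact (continuous_apply i).add (continuous_supAbove ih)

lemma maxChainSum_emptyRelation (c : α → ℝ) : maxChainSum emptyRelation c = c := by
  funext i
  rw [maxChainSum_eq, supAbove_emptyRelation, add_zero]

end MaxChainSum

section Chains

variable {r : α → α → Prop} [IsStrictOrder α r] {c : α → ℝ}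

lemma IsChain.exists_forall_rel {s : Finset α} (hs : IsChain r (s : Set α)) (hne : s.Nonempty) :
    ∃ i ∈ s, ∀ j ∈ s, j ≠ i → r i j := by
  obtain ⟨i, his, hmin⟩ := (Finite.wellFounded_of_trans_of_irrefl r).has_min (s : Set α) hne
  refine ⟨i, his, fun j hj hji => ?_⟩
  rcases hs his hj hji.symm with h | h
  exacts [h, (hmin j hj h).elim]

lemma sum_le_maxChainSum (hc : 0 ≤ c) {s : Finset α} (hs : IsChain r (s : Set α)) {i : α}
    (hi : ∀ j ∈ s, j ≠ i → r i j) : ∑ j ∈ s, c j ≤ maxChainSum r c i := by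
  induction i using (Finite.wellFounded_of_trans_of_irrefl (swap r)).induction generalizing s with
  | _ i ih =>
    classical
    have hsum : ∑ j ∈ s, c j ≤ c i + ∑ j ∈ s.erase i, c j := by
      by_cases his : i ∈ s
      · rw [add_sum_erase s c his]
      · rw [erase_eq_of_notMem his]; exact le_add_of_nonneg_left (hc i)
    have hrest : ∑ j ∈ s.erase i, c j ≤ supAbove r (maxChainSum r c) i := by
      rcases (s.erase i).eq_empty_or_nonempty with h | h
      · rw [h, sum_empty]; exact supAbove_nonneg
      have hs' : IsChain r ((s.erase i : Finset α) : Set α) := hs.mono (by simp)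
      obtain ⟨m, hm, hm_least⟩ := hs'.exists_forall_rel h
      have him : r i m := hi m (mem_of_mem_erase hm) (ne_of_mem_erase hm)
      exact (ih m him hs' hm_least).trans (le_supAbove him)
    rw [maxChainSum_eq]
    linarith

lemma exists_chain_maxChainSum_le (i : α) :
    ∃ s : Finset α, IsChain r (s : Set α) ∧ (∀ j ∈ s, j ≠ i → r i j) ∧
      maxChainSum r c i ≤ ∑ j ∈ s, c j := by
  induction i using (Finite.wellFounded_of_trans_of_irrefl (swap r)).induction with
  | _ i ih =>
    classical
    rw [maxChainSum_eq]
    rcases supAbove_le_zero_or_exists (r := r) (f := maxChainSum r c) (i := i)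
      with h | ⟨j, hij, h⟩
    · exact ⟨{i}, by simp, by simp, by simp; linarith⟩
    obtain ⟨s, hs, hjs, hsum⟩ := ih j hij
    have his : ∀ k ∈ s, r i k := fun k hk => by
      rcases eq_or_ne k j with rfl | hkj
      exacts [hij, _root_.trans hij (hjs k hk hkj)]
    refine ⟨insert i s, ?_, fun k hk hki => his k ((mem_insert.1 hk).resolve_left hki), ?_⟩
    · rw [coe_insert]
      exact hs.insert fun k hk _ => Or.inl (his k hk)
    · rw [sum_insert fun hi => irrefl i (his i hi)]
      linarith

lemma forall_isMaxChain_sum_le_iff (hc : 0 ≤ c) {b : ℝ} (hb : 0 ≤ b) :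
    (∀ s : Finset α, IsMaxChain r (s : Set α) → ∑ j ∈ s, c j ≤ b) ↔
      ∀ i, maxChainSum r c i ≤ b := by
  classical
  constructor
  · intro h i
    obtain ⟨s, hs, -, hsum⟩ := exists_chain_maxChainSum_le (r := r) (c := c) i
    obtain ⟨M, hM, hsM⟩ := hs.exists_maxChain
    calc maxChainSum r c i ≤ ∑ j ∈ s, c j := hsum
      _ ≤ ∑ j ∈ M.toFinset, c j :=
        sum_le_sum_of_subset_of_nonneg (by simpa using hsM) fun j _ _ => hc j
      _ ≤ b := h _ (by simpa using hM)
  · intro h s hs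
    rcases s.eq_empty_or_nonempty with rfl | hne
    · simpa using hb
    obtain ⟨i, -, hi⟩ := hs.isChain.exists_forall_rel hne
    exact (sum_le_maxChainSum hc hs.isChain hi).trans (h i)

end Chains

section Transfer

variable (r s : α → α → Prop) [IsStrictOrder α r] [IsStrictOrder α s]

noncomputable def transferMap (x : α → ℝ) : α → ℝ :=
  maxChainSum r x⁺ - maxChainSum s x⁻

variable {r s} {κ : Type*} [LinearOrder κ] {rk : α → κ}

lemma transferMap_apply_eq_add (x : α → ℝ) (i : α) :
    transferMap r s x i =
      x i + (supAbove r (maxChainSum r x⁺) i - supAbove s (maxChainSum s x⁻) i) := by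
  rw [transferMap, Pi.sub_apply, maxChainSum_eq, maxChainSum_eq (r := s),
    ← posPart_sub_negPart (x i), ← Pi.posPart_apply, ← Pi.negPart_apply]
  ring

theorem measurePreserving_transferMap [DecidableEq α] (hr : ∀ i j, r i j → rk i < rk j)
    (hs : ∀ i j, s i j → rk i < rk j) :
    MeasurePreserving (transferMap r s) volume volume := by
  have hpos : Continuous fun x : α → ℝ => x⁺ :=
    continuous_pi fun j => (continuous_apply j).max continuous_const
  have hneg : Continuous fun x : α → ℝ => x⁻ :=
    continuous_pi fun j => (continuous_apply j).neg.max continuous_const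
  convert measurePreserving_add_of_triangular rk
    (f := fun i x => supAbove r (maxChainSum r x⁺) i - supAbove s (maxChainSum s x⁻) i)
    (fun i => ((continuous_supAbove fun j _ => (continuous_maxChainSum j).comp hpos).sub
      (continuous_supAbove fun j _ => (continuous_maxChainSum j).comp hneg)).measurable)
    (fun i x y hxy => by
      rw [supAbove_maxChainSum_congr (c' := y⁺) hr fun j hj => by simp [hxy j hj],
        supAbove_maxChainSum_congr (c' := y⁻) hs fun j hj => by simp [hxy j hj]]) using 1
  funext x i
  exact transferMap_apply_eq_add x i

theorem maxChainSum_le_of_transferMap_eq (hr : ∀ i j, r i j → rk i < rk j)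
    (hs : ∀ i j, s i j → rk i < rk j) {x u v : α → ℝ} (hu0 : 0 ≤ u) (hv0 : 0 ≤ v)
    (hu : ∀ i j, r i j → u j ≤ u i) (hv : ∀ i j, s i j → v j ≤ v i)
    (hx : transferMap r s x = u - v) : maxChainSum r x⁺ ≤ u ∧ maxChainSum s x⁻ ≤ v := by
  suffices h : ∀ i, maxChainSum r x⁺ i ≤ u i ∧ maxChainSum s x⁻ i ≤ v i from
    ⟨fun i => (h i).1, fun i => (h i).2⟩
  intro i
  induction i using (Finite.wellFounded_of_trans_of_irrefl fun i j => rk j < rk i).induction with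
  | _ i ih =>
    have hA : supAbove r (maxChainSum r x⁺) i ≤ u i :=
      supAbove_le (hu0 i) fun j hj => (ih j (hr i j hj)).1.trans (hu i j hj)
    have hB : supAbove s (maxChainSum s x⁻) i ≤ v i :=
      supAbove_le (hv0 i) fun j hj => (ih j (hs i j hj)).2.trans (hv i j hj)
    have hxi := congrFun hx i
    rw [Pi.sub_apply, transferMap, Pi.sub_apply, maxChainSum_eq, maxChainSum_eq (r := s)] at hxi
    rw [maxChainSum_eq, maxChainSum_eq (r := s)]
    have hpos : 0 ≤ x⁺ i := posPart_nonneg (x i)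
    have hneg : 0 ≤ x⁻ i := negPart_nonneg (x i)
    -- one of `x⁺ i`, `x⁻ i` vanishes, and then `hxi` pins down the other one
    rcases le_total (x i) 0 with h | h
    · have : x⁺ i = 0 := by simpa using h
      constructor <;> linarith
    · have : x⁻ i = 0 := by simpa using h
      constructor <;> linarith

end Transfer

section Polytopes

variable {d : ℕ}

lemma convex_orderPolytope (r : Fin d → Fin d → Prop) : Convex ℝ (orderPolytope r) := by
  rintro x ⟨hx, hxr⟩ y ⟨hy, hyr⟩ a b ha hb hab
  refine ⟨fun i => ⟨?_, ?_⟩, fun i j hij => ?_⟩ <;>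
    simp only [Pi.add_apply, Pi.smul_apply, smul_eq_mul]
  · nlinarith [hx i, hy i]
  · nlinarith [hx i, hy i]
  · nlinarith [hxr i j hij, hyr i j hij]

lemma convex_chainPolytope (r : Fin d → Fin d → Prop) : Convex ℝ (chainPolytope r) := by
  rintro x ⟨hx, hxr⟩ y ⟨hy, hyr⟩ a b ha hb hab
  refine ⟨fun i => ?_, fun c hc => ?_⟩
  · simp only [Pi.add_apply, Pi.smul_apply, smul_eq_mul]; nlinarith [hx i, hy i]
  · simp only [Pi.add_apply, Pi.smul_apply, smul_eq_mul, sum_add_distrib, ← mul_sum]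
    nlinarith [hxr c hc, hyr c hc]

lemma zero_mem_orderPolytope (r : Fin d → Fin d → Prop) : 0 ∈ orderPolytope r :=
  ⟨fun _ => ⟨le_rfl, zero_le_one⟩, fun _ _ _ => le_rfl⟩

lemma zero_mem_chainPolytope (r : Fin d → Fin d → Prop) : 0 ∈ chainPolytope r :=
  ⟨fun _ => le_rfl, fun _ _ => by simp⟩

lemma mem_smul_orderPolytope (r : Fin d → Fin d → Prop) {l : ℝ} (hl : 0 ≤ l) {u : Fin d → ℝ} :
    u ∈ l • orderPolytope r ↔ (∀ i, 0 ≤ u i ∧ u i ≤ l) ∧ ∀ i j, r i j → u j ≤ u i := by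
  rcases hl.eq_or_lt with rfl | hl
  · rw [Set.zero_smul_set ⟨0, zero_mem_orderPolytope r⟩, Set.mem_zero]
    constructor
    · rintro rfl; simp
    · exact fun ⟨h, _⟩ => funext fun i => le_antisymm (h i).2 (h i).1
  · rw [Set.mem_smul_set_iff_inv_smul_mem₀ hl.ne']
    simp only [orderPolytope, Set.mem_ofPred_eq, Pi.smul_apply, smul_eq_mul, inv_mul_le_iff₀ hl,
      mul_one, mul_inv_cancel_left₀ hl.ne', mul_nonneg_iff_of_pos_left (inv_pos.2 hl)]

lemma mem_smul_chainPolytope_iff_sum_le (r : Fin d → Fin d → Prop) {m : ℝ} (hm : 0 ≤ m)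
    {v : Fin d → ℝ} :
    v ∈ m • chainPolytope r ↔
      0 ≤ v ∧ ∀ c : Finset (Fin d), IsMaxChain r (c : Set (Fin d)) → ∑ i ∈ c, v i ≤ m := by
  rcases hm.eq_or_lt with rfl | hm
  · rw [Set.zero_smul_set ⟨0, zero_mem_chainPolytope r⟩, Set.mem_zero]
    constructor
    · rintro rfl; simp
    refine fun ⟨hv, hc⟩ => funext fun i => le_antisymm ?_ (hv i)
    obtain ⟨M, hM, hiM⟩ := (IsChain.singleton (r := r) (a := i)).exists_maxChain
    classical
    calc v i ≤ ∑ j ∈ M.toFinset, v j :=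
          single_le_sum (fun j _ => hv j) (by simpa using hiM)
      _ ≤ 0 := hc _ (by simpa using hM)
  · rw [Set.mem_smul_set_iff_inv_smul_mem₀ hm.ne']
    simp only [chainPolytope, Set.mem_ofPred_eq, Pi.smul_apply, smul_eq_mul, ← mul_sum,
      inv_mul_le_iff₀ hm, mul_one, mul_nonneg_iff_of_pos_left (inv_pos.2 hm), Pi.le_def,
      Pi.zero_apply]

lemma mem_smul_chainPolytope (r : Fin d → Fin d → Prop) [IsStrictOrder (Fin d) r] {m : ℝ}
    (hm : 0 ≤ m) {v : Fin d → ℝ} :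
    v ∈ m • chainPolytope r ↔ 0 ≤ v ∧ ∀ i, maxChainSum r v i ≤ m := by
  rw [mem_smul_chainPolytope_iff_sum_le _ hm]
  exact and_congr_right fun hv => forall_isMaxChain_sum_le_iff hv hm

variable {r s : Fin d → Fin d → Prop} [IsStrictOrder (Fin d) r] [IsStrictOrder (Fin d) s]
  {l m : ℝ}

lemma mem_smul_chainPolytope_sub_iff (hl : 0 ≤ l) (hm : 0 ≤ m) (x : Fin d → ℝ) :
    x ∈ l • chainPolytope r - m • chainPolytope s ↔
      (∀ i, maxChainSum r x⁺ i ≤ l) ∧ ∀ i, maxChainSum s x⁻ i ≤ m := by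
  simp only [Set.mem_sub, mem_smul_chainPolytope _ hl, mem_smul_chainPolytope _ hm]
  constructor
  · rintro ⟨u, ⟨hu0, hu⟩, v, ⟨hv0, hv⟩, rfl⟩
    have hpos : (u - v)⁺ ≤ u := sup_le (sub_le_self u hv0) hu0
    have hneg : (u - v)⁻ ≤ v := sup_le (by rw [neg_sub]; exact sub_le_self v hu0) hv0
    exact ⟨fun i => (maxChainSum_mono hpos i).trans (hu i),
      fun i => (maxChainSum_mono hneg i).trans (hv i)⟩
  · exact fun ⟨h₁, h₂⟩ =>
      ⟨x⁺, ⟨posPart_nonneg x, h₁⟩, x⁻, ⟨negPart_nonneg x, h₂⟩, posPart_sub_negPart x⟩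

lemma maxChainSum_mem_smul_orderPolytope {c : Fin d → ℝ} (hc : 0 ≤ c) (hl : 0 ≤ l)
    (h : ∀ i, maxChainSum r c i ≤ l) : maxChainSum r c ∈ l • orderPolytope r :=
  (mem_smul_orderPolytope _ hl).2
    ⟨fun i => ⟨maxChainSum_nonneg hc, h i⟩, fun _ _ => maxChainSum_le_of_rel hc⟩

variable {κ : Type*} [LinearOrder κ] {rk : Fin d → κ}

lemma transferMap_mem_orderPolytope_sub_iff (hr : ∀ i j, r i j → rk i < rk j)
    (hs : ∀ i j, s i j → rk i < rk j) (hl : 0 ≤ l) (hm : 0 ≤ m) (x : Fin d → ℝ) :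
    transferMap r s x ∈ l • orderPolytope r - m • orderPolytope s ↔
      x ∈ l • chainPolytope r - m • chainPolytope s := by
  rw [mem_smul_chainPolytope_sub_iff hl hm, Set.mem_sub]
  constructor
  · rintro ⟨u, hu, v, hv, huv⟩
    obtain ⟨hu, hu_anti⟩ := (mem_smul_orderPolytope _ hl).1 hu
    obtain ⟨hv, hv_anti⟩ := (mem_smul_orderPolytope _ hm).1 hv
    obtain ⟨h₁, h₂⟩ := maxChainSum_le_of_transferMap_eq hr hs (fun i => (hu i).1)
      (fun i => (hv i).1) hu_anti hv_anti huv.symm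
    exact ⟨fun i => (h₁ i).trans (hu i).2, fun i => (h₂ i).trans (hv i).2⟩
  · rintro ⟨h₁, h₂⟩
    exact ⟨_, maxChainSum_mem_smul_orderPolytope (posPart_nonneg x) hl h₁,
      _, maxChainSum_mem_smul_orderPolytope (negPart_nonneg x) hm h₂, rfl⟩

lemma transferMap_mem_orderPolytope_sub_chainPolytope_iff (hr : ∀ i j, r i j → rk i < rk j)
    (hl : 0 ≤ l) (hm : 0 ≤ m) (x : Fin d → ℝ) :
    transferMap r emptyRelation x ∈ l • orderPolytope r - m • chainPolytope s ↔
      x ∈ l • chainPolytope r - m • chainPolytope s := by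
  rw [mem_smul_chainPolytope_sub_iff hl hm, Set.mem_sub]
  constructor
  · rintro ⟨u, hu, v, hv, huv⟩
    obtain ⟨hu, hu_anti⟩ := (mem_smul_orderPolytope _ hl).1 hu
    obtain ⟨hv0, hv⟩ := (mem_smul_chainPolytope s hm).1 hv
    obtain ⟨h₁, h₂⟩ := maxChainSum_le_of_transferMap_eq (s := emptyRelation) hr
      (fun _ _ => False.elim) (fun i => (hu i).1) hv0 hu_anti (fun _ _ => False.elim) huv.symm
    rw [maxChainSum_emptyRelation] at h₂
    exact ⟨fun i => (h₁ i).trans (hu i).2, fun i => (maxChainSum_mono h₂ i).trans (hv i)⟩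
  · rintro ⟨h₁, h₂⟩
    refine ⟨_, maxChainSum_mem_smul_orderPolytope (posPart_nonneg x) hl h₁,
      _, (mem_smul_chainPolytope s hm).2 ⟨negPart_nonneg x, h₂⟩, ?_⟩
    rw [transferMap, maxChainSum_emptyRelation]

lemma orderPolytope_le_eq_lt (P : PartialOrder (Fin d)) :
    orderPolytope P.le = orderPolytope P.lt := by
  ext x
  refine and_congr_right fun _ => ⟨fun h i j hij => h i j hij.le, fun h i j hij => ?_⟩
  rcases hij.lt_or_eq with hij | rfl
  exacts [h i j hij, le_rfl]

lemma chainPolytope_le_eq_lt (P : PartialOrder (Fin d)) :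
    chainPolytope P.le = chainPolytope P.lt := by
  have hchain : ∀ t : Set (Fin d), IsChain P.le t ↔ IsChain P.lt t := fun t =>
    ⟨IsChain.lt_of_le, fun h => h.mono_rel fun _ _ => le_of_lt⟩
  have hmax : ∀ t : Set (Fin d), IsMaxChain P.le t ↔ IsMaxChain P.lt t := fun t => by
    simp only [IsMaxChain, hchain]
  ext x
  simp only [chainPolytope, Set.mem_ofPred_eq, hmax]

end Polytopes

section Omega

variable {d : ℕ}

lemma Fin.snoc_smul_add_smul (a b : ℝ) (x y : Fin d → ℝ) (s t : ℝ) :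
    a • (Fin.snoc x s : Fin (d + 1) → ℝ) + b • Fin.snoc y t =
      Fin.snoc (a • x + b • y) (a * s + b * t) := by
  ext k
  induction k using Fin.lastCases <;> simp

lemma Convex.image_snoc {A : Set (Fin d → ℝ)} (hA : Convex ℝ A) (ε t : ℝ) :
    Convex ℝ ((fun x => (Fin.snoc (ε • x) t : Fin (d + 1) → ℝ)) '' A) := by
  rintro _ ⟨x, hx, rfl⟩ _ ⟨y, hy, rfl⟩ a b ha hb hab
  refine ⟨a • x + b • y, hA hx hy ha hb hab, ?_⟩
  simp only [Fin.snoc_smul_add_smul, ← add_mul, hab, one_mul, smul_add, smul_comm ε a,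
    smul_comm ε b]

lemma mem_OmegaPoly_snoc {A B : Set (Fin d → ℝ)} (hA : Convex ℝ A) (hB : Convex ℝ B)
    (hA₀ : A.Nonempty) (hB₀ : B.Nonempty) (x : Fin d → ℝ) (t : ℝ) :
    (Fin.snoc x t : Fin (d + 1) → ℝ) ∈ OmegaPoly A B ↔
      ∃ l m : ℝ, 0 ≤ l ∧ 0 ≤ m ∧ l + m = 1 ∧ l - m = t ∧ x ∈ l • A - m • B := by
  have hA' := hA.image_snoc 1 1
  have hB' := hB.image_snoc (-1) (-1)
  simp only [one_smul, neg_one_smul] at hA' hB'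
  rw [OmegaPoly, hA'.convexHull_union hB' (hA₀.image _) (hB₀.image _), mem_convexJoin]
  simp only [Set.mem_image, segment, Set.mem_sub, Set.mem_smul_set]
  constructor
  · rintro ⟨_, ⟨a, ha, rfl⟩, _, ⟨b, hb, rfl⟩, l, m, hl, hm, hlm, h⟩
    rw [Fin.snoc_smul_add_smul, Fin.snoc_inj] at h
    exact ⟨l, m, hl, hm, hlm, by linarith [h.2], _, ⟨a, ha, rfl⟩, _, ⟨b, hb, rfl⟩, by
      rw [← h.1, smul_neg, sub_eq_add_neg]⟩
  · rintro ⟨l, m, hl, hm, hlm, rfl, _, ⟨a, ha, rfl⟩, _, ⟨b, hb, rfl⟩, rfl⟩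
    refine ⟨_, ⟨a, ha, rfl⟩, _, ⟨b, hb, rfl⟩, l, m, hl, hm, hlm, ?_⟩
    rw [Fin.snoc_smul_add_smul, smul_neg, ← sub_eq_add_neg]
    congr 1; ring

lemma preimage_OmegaPoly {A B A' B' : Set (Fin d → ℝ)} (hA : Convex ℝ A) (hB : Convex ℝ B)
    (hA₀ : A.Nonempty) (hB₀ : B.Nonempty) (hA' : Convex ℝ A') (hB' : Convex ℝ B')
    (hA'₀ : A'.Nonempty) (hB'₀ : B'.Nonempty) {G : (Fin d → ℝ) → Fin d → ℝ}
    (hG : ∀ l m : ℝ, 0 ≤ l → 0 ≤ m → ∀ x, G x ∈ l • A' - m • B' ↔ x ∈ l • A - m • B) :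
    (fun z : Fin (d + 1) → ℝ =>
        (Fin.snoc (G (Fin.init z)) (z (Fin.last d)) : Fin (d + 1) → ℝ)) ⁻¹' OmegaPoly A' B' =
      OmegaPoly A B := by
  ext z
  rw [Set.mem_preimage, mem_OmegaPoly_snoc hA' hB' hA'₀ hB'₀, ← Fin.snoc_init_self z,
    mem_OmegaPoly_snoc hA hB hA₀ hB₀, Fin.init_snoc, Fin.snoc_last]
  refine exists₂_congr fun l m => ?_
  constructor <;> rintro ⟨hl, hm, hlm, ht, h⟩
  exacts [⟨hl, hm, hlm, ht, (hG l m hl hm _).1 h⟩, ⟨hl, hm, hlm, ht, (hG l m hl hm _).2 h⟩]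

theorem volume_OmegaPoly_eq {A B A' B' : Set (Fin d → ℝ)} (hA : Convex ℝ A) (hB : Convex ℝ B)
    (hA₀ : A.Nonempty) (hB₀ : B.Nonempty) (hA' : Convex ℝ A') (hB' : Convex ℝ B')
    (hA'₀ : A'.Nonempty) (hB'₀ : B'.Nonempty) {G : (Fin d → ℝ) → Fin d → ℝ}
    (hGm : MeasurePreserving G volume volume)
    (hG : ∀ l m : ℝ, 0 ≤ l → 0 ≤ m → ∀ x, G x ∈ l • A' - m • B' ↔ x ∈ l • A - m • B) :
    volume (OmegaPoly A B) = volume (OmegaPoly A' B') := by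
  rw [← preimage_OmegaPoly hA hB hA₀ hB₀ hA' hB' hA'₀ hB'₀ hG]
  exact hGm.snoc_init.measure_preimage ((convex_convexHull ℝ _).nullMeasurableSet volume)

end Omega

/-- If `P` and `Q` have a common linear extension `σ`, then `Ω(O_P, O_Q)`,
`Ω(O_P, C_Q)` and `Ω(C_P, C_Q)` all have the same `(d+1)`-dimensional volume. -/
theorem volume_Omega_eq (d : ℕ) (P Q : PartialOrder (Fin d))
    (σ : Equiv.Perm (Fin d))
    (hP : ∀ a b : Fin d, P.lt (σ a) (σ b) → a < b)
    (hQ : ∀ a b : Fin d, Q.lt (σ a) (σ b) → a < b) :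
    volume (OmegaPoly (orderPolytope P.le) (orderPolytope Q.le)) =
      volume (OmegaPoly (orderPolytope P.le) (chainPolytope Q.le)) ∧
    volume (OmegaPoly (orderPolytope P.le) (chainPolytope Q.le)) =
      volume (OmegaPoly (chainPolytope P.le) (chainPolytope Q.le)) := by
  -- `P` and `Q` are both local instances on `Fin d`, so instance search cannot find these
  have : IsStrictOrder (Fin d) P.lt := @instIsStrictOrderLt _ P.toPreorder
  have : IsStrictOrder (Fin d) Q.lt := @instIsStrictOrderLt _ Q.toPreorder
  have hP' : ∀ i j, P.lt i j → (σ.symm i : ℕ) < σ.symm j := fun i j h => hP _ _ (by simpa using h)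
  have hQ' : ∀ i j, Q.lt i j → (σ.symm i : ℕ) < σ.symm j := fun i j h => hQ _ _ (by simpa using h)
  rw [orderPolytope_le_eq_lt P, orderPolytope_le_eq_lt Q, chainPolytope_le_eq_lt P,
    chainPolytope_le_eq_lt Q]
  have hCC_OO := volume_OmegaPoly_eq (convex_chainPolytope P.lt) (convex_chainPolytope Q.lt)
    ⟨0, zero_mem_chainPolytope _⟩ ⟨0, zero_mem_chainPolytope _⟩ (convex_orderPolytope P.lt)
    (convex_orderPolytope Q.lt) ⟨0, zero_mem_orderPolytope _⟩ ⟨0, zero_mem_orderPolytope _⟩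
    (measurePreserving_transferMap hP' hQ') fun _ _ hl hm =>
      transferMap_mem_orderPolytope_sub_iff hP' hQ' hl hm
  have hCC_OC := volume_OmegaPoly_eq (convex_chainPolytope P.lt) (convex_chainPolytope Q.lt)
    ⟨0, zero_mem_chainPolytope _⟩ ⟨0, zero_mem_chainPolytope _⟩ (convex_orderPolytope P.lt)
    (convex_chainPolytope Q.lt) ⟨0, zero_mem_orderPolytope _⟩ ⟨0, zero_mem_chainPolytope _⟩
    (measurePreserving_transferMap (s := emptyRelation) hP' fun _ _ => False.elim)
    fun _ _ hl hm => transferMap_mem_orderPolytope_sub_chainPolytope_iff hP' hl hm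
  exact ⟨hCC_OO.symm.trans hCC_OC, hCC_OC.symm⟩
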